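/- Let Ω ⊂ R^2 be a bounded open set, 1<p<∞, and f : Ω × R^2 → R Borel with α|ξ|^p ≤ f(x,ξ) ≤ β|ξ|^p + γ and f(x,·) strictly convex for a.e. x. If (w_h) is a sequence in L^p(Ω,R^2) converging weakly to w in L^p(Ω,R^2) and ∫_Ω f(x,w_h) dx → ∫_Ω f(x,w) dx, then w_h → w strongly in L^p(Ω,R^2). -/

import Mathlib

open MeasureTheory Metric Set Filter Topology Bornology
open scoped RealInnerProductSpace NNReal ENNReal

noncomputable section

/-- The plane `ℝ²`. -/
abbrev E2 : Type := EuclideanSpace ℝ (Fin 2)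

/-- Smooth test functions compactly supported in `U`. -/
def IsTestOn (U : Set E2) (φ : E2 → ℝ) : Prop :=
  ContDiff ℝ (⊤ : ℕ∞) φ ∧ HasCompactSupport φ ∧ tsupport φ ⊆ U

/-- `g` is the (distributional) gradient of `u` on the open set `U`. -/
def HasWeakGradOn (u : E2 → ℝ) (g : E2 → E2) (U : Set E2) : Prop :=
  ∀ φ : E2 → ℝ, IsTestOn U φ →
    ∫ x in U, u x • gradient φ x = - ∫ x in U, φ x • g x

/-- `u ∈ L^p_loc(U)`. -/
def MemLpLocOn (p : ℝ) (U : Set E2) (u : E2 → ℝ) : Prop :=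
  ∀ K : Set E2, IsCompact K → K ⊆ U → MemLp u (ENNReal.ofReal p) (volume.restrict K)

/-- The Deny–Lions space `L^{1,p}(U)`: `u ∈ L^p_loc(U)` with weak gradient `g ∈ L^p(U,ℝ²)`. -/
def MemDenyLions (p : ℝ) (U : Set E2) (u : E2 → ℝ) (g : E2 → E2) : Prop :=
  MemLpLocOn p U u ∧ HasWeakGradOn u g U ∧
    MemLp g (ENNReal.ofReal p) (volume.restrict U)

/-- The Sobolev space `W^{1,p}(U)` (as a predicate on `(u, ∇u)`). -/
def MemW1p (p : ℝ) (U : Set E2) (u : E2 → ℝ) (g : E2 → E2) : Prop :=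
  MemLp u (ENNReal.ofReal p) (volume.restrict U) ∧ HasWeakGradOn u g U ∧
    MemLp g (ENNReal.ofReal p) (volume.restrict U)

/-- The Sobolev space `W^{1,p}_0(B)`: members of `W^{1,p}(B)` approximable in the
`W^{1,p}` norm by smooth functions compactly supported in `B`. -/
def MemW1p0 (p : ℝ) (B : Set E2) (u : E2 → ℝ) (g : E2 → E2) : Prop :=
  MemW1p p B u g ∧
  ∀ ε > 0, ∃ φ : E2 → ℝ, IsTestOn B φ ∧
    eLpNorm (fun x => u x - φ x) (ENNReal.ofReal p) (volume.restrict B) < ENNReal.ofReal ε ∧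
    eLpNorm (fun x => g x - gradient φ x) (ENNReal.ofReal p) (volume.restrict B)
      < ENNReal.ofReal ε

/-- The `(1,r)`-capacity of `E` in `B`:
`inf { ∫_B |∇u|^r : u ∈ W^{1,r}_0(B), u ≥ 1 a.e. on a neighborhood of E }`. -/
def capacity (r : ℝ) (E B : Set E2) : ℝ :=
  sInf { c : ℝ | ∃ u g, MemW1p0 r B u g ∧
      (∃ N : Set E2, IsOpen N ∧ E ⊆ N ∧ ∀ᵐ x ∂(volume.restrict N), 1 ≤ u x) ∧
      c = ∫ x in B, ‖g x‖ ^ r }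

/-- A set is `C_r`-null if it has zero `(1,r)`-capacity in every bounded open set containing it. -/
def CapNull (r : ℝ) (N : Set E2) : Prop :=
  ∀ B : Set E2, IsOpen B → IsBounded B → N ⊆ B → capacity r N B = 0

/-- `ubar` is a quasi-continuous representative of `u` (w.r.t. the `(1,r)`-capacity),
defined on `closure U`. -/
def QCRep (r : ℝ) (U : Set E2) (u ubar : E2 → ℝ) : Prop :=
  (∀ᵐ x ∂(volume.restrict U), ubar x = u x) ∧
  ∀ ε > 0, ∃ A : Set E2,
    (∃ B : Set E2, IsOpen B ∧ IsBounded B ∧ A ⊆ B ∧ capacity r A B < ε) ∧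
    ContinuousOn ubar (closure U \ A)

/-- `u = v` `C_r`-quasi everywhere on `S` (via quasi-continuous representatives on `U`). -/
def EqQeOn (r : ℝ) (U S : Set E2) (u v : E2 → ℝ) : Prop :=
  ∃ ubar vbar, QCRep r U u ubar ∧ QCRep r U v vbar ∧
    ∃ N : Set E2, CapNull r N ∧ ∀ x ∈ S \ N, ubar x = vbar x

/-- Standing assumptions on the volume density `f`:
Borel, `p`-growth `α|ξ|^p ≤ f(x,ξ) ≤ β|ξ|^p + γ`, and `f(x,·)` strictly convex and `C¹`. -/
structure PGrowth (p α β γ : ℝ) (Ω : Set E2) (f : E2 → E2 → ℝ) : Prop where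
  measurable : Measurable (Function.uncurry f)
  lower : ∀ᵐ x ∂(volume.restrict Ω), ∀ ξ : E2, α * ‖ξ‖ ^ p ≤ f x ξ
  upper : ∀ᵐ x ∂(volume.restrict Ω), ∀ ξ : E2, f x ξ ≤ β * ‖ξ‖ ^ p + γ
  strictConvex : ∀ᵐ x ∂(volume.restrict Ω), StrictConvexOn ℝ Set.univ (f x)
  smooth : ∀ᵐ x ∂(volume.restrict Ω), ContDiff ℝ 1 (f x)

/-- `f_ξ(x,ξ)`: the gradient of `f(x,·)` at `ξ`. -/
def fxi (f : E2 → E2 → ℝ) (x ξ : E2) : E2 := gradient (f x) ξ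

/-- Admissible pairs for the minimum problem: `u ∈ L^{1,p}(Ω \ K)` with `u = g`
`C_p`-q.e. on `∂_D Ω \ K`. -/
def Admissible (p : ℝ) (Ω DΩ K : Set E2) (g u : E2 → ℝ) (Gu : E2 → E2) : Prop :=
  MemDenyLions p (Ω \ K) u Gu ∧ EqQeOn p (Ω \ K) (DΩ \ K) u g

/-- `u` solves `min { ∫_{Ω\K} f(x,∇v) : v ∈ L^{1,p}(Ω\K), v = g on ∂_D Ω \ K }`. -/
def IsMinimizer (p : ℝ) (f : E2 → E2 → ℝ) (Ω DΩ K : Set E2)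
    (g u : E2 → ℝ) (Gu : E2 → E2) : Prop :=
  Admissible p Ω DΩ K g u Gu ∧
  ∀ v Gv, Admissible p Ω DΩ K g v Gv →
    ∫ x in Ω \ K, f x (Gu x) ≤ ∫ x in Ω \ K, f x (Gv x)

/-- `K` has at most `m` connected components. -/
def AtMostComponents (m : ℕ) (K : Set E2) : Prop :=
  ∃ C : Fin m → Set E2, (∀ i, IsPreconnected (C i)) ∧ K = ⋃ i, C i

/-- `C` is a connected component of `S`. -/
def IsCompOf (C S : Set E2) : Prop := ∃ x ∈ S, C = connectedComponentIn S x

open Classical in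
/-- `dist(x, K)` with the paper's convention `dist(x, ∅) = diam Ω`. -/
def paperDist (Ω : Set E2) (x : E2) (K : Set E2) : ℝ :=
  if K = ∅ then diam Ω else infDist x K

/-- Hausdorff distance with the paper's conventions (`sup ∅ = 0`). -/
def dH (Ω K1 K2 : Set E2) : ℝ :=
  max (sSup ((fun x => paperDist Ω x K2) '' K1))
      (sSup ((fun x => paperDist Ω x K1) '' K2))

/-- Convergence of the sequence `K h` to `L` in the Hausdorff metric. -/
def HConv (Ω : Set E2) (K : ℕ → Set E2) (L : Set E2) : Prop :=
  Tendsto (fun h => dH Ω (K h) L) atTop (nhds 0)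

/-- Weak convergence in `L^p(U,ℝ²)`, tested against `L^q(U,ℝ²)` functions. -/
def WeakLpVec (q : ℝ) (U : Set E2) (F : ℕ → E2 → E2) (G : E2 → E2) : Prop :=
  ∀ ψ : E2 → E2, MemLp ψ (ENNReal.ofReal q) (volume.restrict U) →
    Tendsto (fun n => ∫ x in U, ⟪F n x, ψ x⟫) atTop (nhds (∫ x in U, ⟪G x, ψ x⟫))

/-- The energy `E(u,K) = ∫_{Ω\K} f(x,∇u) dx + H¹(K)` (valued in `ℝ≥0∞`). -/
def energy (f : E2 → E2 → ℝ) (Ω K : Set E2) (Gu : E2 → E2) : ℝ≥0∞ :=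
  ENNReal.ofReal (∫ x in Ω \ K, f x (Gu x)) + μH[1] K

/-- `(u, K)` is a unilateral minimizer of the energy relative to the datum `g`. -/
def UnilateralMin (p : ℝ) (m : ℕ) (f : E2 → E2 → ℝ) (Ω DΩ K : Set E2)
    (g u : E2 → ℝ) (Gu : E2 → E2) : Prop :=
  Admissible p Ω DΩ K g u Gu ∧
  ∀ H : Set E2, IsCompact H → H ⊆ closure Ω → K ⊆ H → AtMostComponents m H →
    ∀ v Gv, Admissible p Ω DΩ H g v Gv →
      energy f Ω K Gu ≤ energy f Ω H Gv

/-- `U ⊂ ℝ²` has Lipschitz continuous boundary: near each boundary point, after a rigid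
motion, `U` is the open epigraph of a Lipschitz function. -/
def HasLipschitzBoundary (U : Set E2) : Prop :=
  ∀ x ∈ frontier U, ∃ (e : E2 ≃ₗᵢ[ℝ] E2) (f : ℝ → ℝ) (L : ℝ≥0) (ε : ℝ),
    0 < ε ∧ LipschitzWith L f ∧
    ∀ y ∈ ball x ε, (y ∈ U ↔ f (e (y - x) 0) < e (y - x) 1)

/-- `S` is relatively open in `T`. -/
def RelOpenIn (S T : Set E2) : Prop := ∃ V : Set E2, IsOpen V ∧ S = V ∩ T

/-- Counterclockwise rotation by `π/2`: `R(y₁,y₂) = (-y₂, y₁)`. -/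
def Rot (y : E2) : E2 := WithLp.toLp 2 (fun i : Fin 2 => if i = 0 then -(y 1) else y 0)

lemma inner_gradient_eq (g : E2 → ℝ) (x : E2) (v : E2) :
    ⟪gradient g x, v⟫ = fderiv ℝ g x v := by
  rw [gradient, InnerProductSpace.toDual_symm_apply]

lemma convex_subgrad {g : E2 → ℝ} (hg : ConvexOn ℝ univ g) {x : E2}
    (hd : DifferentiableAt ℝ g x) (y : E2) :
    g x + ⟪gradient g x, y - x⟫ ≤ g y := by
  set v := y - x with hv
  have hc : HasDerivAt (fun t : ℝ => x + t • v) v 0 := by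
    simpa using ((hasDerivAt_id (0:ℝ)).smul_const v).const_add x
  have hφd : HasDerivAt (fun t : ℝ => g (x + t • v)) (fderiv ℝ g x v) 0 := by
    have hd' : HasFDerivAt g (fderiv ℝ g x) (x + (0:ℝ) • v) := by simpa using hd.hasFDerivAt
    exact (hd'.comp_hasDerivAt 0 hc)
  have hφc : ConvexOn ℝ univ (fun t : ℝ => g (x + t • v)) := by
    have h1 : ConvexOn ℝ univ (g ∘ (AffineMap.lineMap x y : ℝ →ᵃ[ℝ] E2)) := by
      simpa using hg.comp_affineMap (AffineMap.lineMap x y)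
    have h2 : (fun t : ℝ => g (x + t • v)) = g ∘ (AffineMap.lineMap x y : ℝ →ᵃ[ℝ] E2) := by
      funext t
      simp [AffineMap.lineMap_apply, hv]
      congr 1
      module
    rw [h2]; exact h1
  have := hφc.le_slope_of_hasDerivAt (mem_univ (0:ℝ)) (mem_univ (1:ℝ)) one_pos hφd
  rw [slope_def_field] at this
  simp only [one_smul, zero_smul, add_zero, sub_zero, div_one] at this
  have h3 : x + v = y := by simp [hv]
  rw [inner_gradient_eq]
  rw [h3] at this
  linarith

lemma gradient_bound {p β γ : ℝ} (hp : 1 < p) (hβ : 0 < β) (hγ : 0 < γ)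
    {g : E2 → ℝ} (hg : ConvexOn ℝ univ g) (hdg : Differentiable ℝ g)
    (h0 : ∀ ξ : E2, 0 ≤ g ξ) (hup : ∀ ξ : E2, g ξ ≤ β * ‖ξ‖ ^ p + γ) (ξ : E2) :
    ‖gradient g ξ‖ ≤ (β * 3 ^ p * 2 ^ (p-1) + γ) * (1 + ‖ξ‖ ^ (p-1)) := by
  set z := gradient g ξ with hz
  set t := ‖ξ‖ with ht
  have ht0 : 0 ≤ t := norm_nonneg _
  have hkey : ‖z‖ * (t + 1) ≤ β * (3 * (t+1)) ^ p + γ := by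
    rcases eq_or_ne z 0 with h0z | h0z
    · rw [h0z]
      simp only [norm_zero, zero_mul]
      positivity
    · set v := ((t + 1) / ‖z‖) • z with hv
      have hzpos : 0 < ‖z‖ := norm_pos_iff.mpr h0z
      have hinner : ⟪z, v⟫ = ‖z‖ * (t + 1) := by
        rw [hv, real_inner_smul_right, real_inner_self_eq_norm_sq]
        field_simp
      have h1 : g ξ + ⟪z, v⟫ ≤ g (ξ + v) := by
        have := convex_subgrad hg (hdg ξ) (ξ + v)
        rw [hz, inner_gradient_eq]
        simpa using this
      have h2 : g (ξ + v) ≤ β * ‖ξ + v‖ ^ p + γ := hup _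
      have hnv : ‖v‖ = t + 1 := by
        rw [hv, norm_smul]
        simp only [Real.norm_eq_abs]
        rw [abs_of_pos (by positivity)]
        field_simp
      have h3 : ‖ξ + v‖ ≤ 3 * (t + 1) := by
        calc ‖ξ + v‖ ≤ ‖ξ‖ + ‖v‖ := norm_add_le _ _
        _ = t + (t + 1) := by rw [hnv]
        _ ≤ 3 * (t + 1) := by linarith
      have h4 : ‖ξ + v‖ ^ p ≤ (3 * (t+1)) ^ p :=
        Real.rpow_le_rpow (norm_nonneg _) h3 (by linarith)
      have := h0 ξ
      nlinarith [hinner, h1, h2]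
  have ht1 : (0:ℝ) < t + 1 := by linarith
  have hstep : ‖z‖ ≤ β * 3 ^ p * (t+1) ^ (p-1) + γ := by
    have hexp : (3 * (t+1)) ^ p = 3 ^ p * (t+1) ^ p :=
      Real.mul_rpow (by norm_num) (by linarith)
    have hpow : (t+1) ^ p = (t+1) ^ (p-1) * (t+1) := by
      rw [← Real.rpow_add_one (by positivity)]
      ring_nf
    rw [hexp, hpow] at hkey
    have hdiv : ‖z‖ ≤ (β * (3 ^ p * ((t+1)^(p-1) * (t+1))) + γ) / (t+1) :=
      (le_div_iff₀ ht1).mpr hkey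
    calc ‖z‖ ≤ (β * (3 ^ p * ((t+1)^(p-1) * (t+1))) + γ) / (t+1) := hdiv
    _ = β * 3 ^ p * (t+1)^(p-1) + γ / (t+1) := by field_simp
    _ ≤ β * 3 ^ p * (t+1)^(p-1) + γ := by
        have : γ / (t+1) ≤ γ := by
          rw [div_le_iff₀ ht1]; nlinarith
        linarith
  have hfin : (t+1) ^ (p-1) ≤ 2 ^ (p-1) * (1 + t ^ (p-1)) := by
    have hp1 : (0:ℝ) ≤ p - 1 := by linarith
    rcases le_total t 1 with h | h
    · calc (t+1)^(p-1) ≤ (2:ℝ)^(p-1) :=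
            Real.rpow_le_rpow (by linarith) (by linarith) hp1
      _ ≤ 2^(p-1) * (1 + t^(p-1)) := by
          nlinarith [Real.rpow_nonneg ht0 (p-1),
            Real.rpow_nonneg (show (0:ℝ) ≤ 2 by norm_num) (p-1)]
    · calc (t+1)^(p-1) ≤ (2*t)^(p-1) :=
            Real.rpow_le_rpow (by linarith) (by linarith) hp1
      _ = 2^(p-1) * t^(p-1) := Real.mul_rpow (by norm_num) ht0
      _ ≤ 2^(p-1) * (1 + t^(p-1)) := by
          nlinarith [Real.rpow_nonneg (show (0:ℝ) ≤ 2 by norm_num) (p-1)]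
  calc ‖z‖ ≤ β * 3 ^ p * (t+1) ^ (p-1) + γ := hstep
  _ ≤ β * 3 ^ p * (2 ^ (p-1) * (1 + t ^ (p-1))) + γ * (1 + t ^ (p-1)) := by
      have h5 : (0:ℝ) < β * 3 ^ p := by positivity
      have h6 : 1 ≤ 1 + t ^ (p-1) := by nlinarith [Real.rpow_nonneg ht0 (p-1)]
      nlinarith [hfin]
  _ = (β * 3 ^ p * 2 ^ (p-1) + γ) * (1 + t ^ (p-1)) := by ring

lemma bregman_tendsto {g : E2 → ℝ} (hg : StrictConvexOn ℝ univ g) (hdg : ContDiff ℝ 1 g)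
    {ξ₀ : E2} {ξ : ℕ → E2}
    (hD : Tendsto (fun k => g (ξ k) - g ξ₀ - ⟪gradient g ξ₀, ξ k - ξ₀⟫) atTop (nhds 0)) :
    Tendsto ξ atTop (nhds ξ₀) := by
  set z := gradient g ξ₀ with hz
  set D : E2 → ℝ := fun y => g y - g ξ₀ - ⟪z, y - ξ₀⟫ with hDdef
  have hdiff : Differentiable ℝ g := hdg.differentiable one_ne_zero
  have hDnn : ∀ y, 0 ≤ D y := by
    intro y
    have := convex_subgrad hg.convexOn (hdiff ξ₀) y
    simp only [hDdef]
    linarith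
  have hDcont : Continuous D := by
    apply Continuous.sub
    · exact (hdg.continuous.sub continuous_const)
    · exact (continuous_const.inner (continuous_id.sub continuous_const))
  have hDzero : ∀ y, D y = 0 → y = ξ₀ := by
    intro y hy
    by_contra hne
    have hmid := hg.2 (mem_univ ξ₀) (mem_univ y) (fun h => hne h.symm)
      (by norm_num : (0:ℝ) < 1/2) (by norm_num : (0:ℝ) < 1/2) (by norm_num)
    have hsub := hDnn ((1/2 : ℝ) • ξ₀ + (1/2 : ℝ) • y)
    simp only [hDdef] at hsub
    have hinner : ⟪z, ((1/2:ℝ) • ξ₀ + (1/2:ℝ) • y) - ξ₀⟫ = (1/2) * ⟪z, y - ξ₀⟫ := by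
      have : ((1/2:ℝ) • ξ₀ + (1/2:ℝ) • y) - ξ₀ = (1/2:ℝ) • (y - ξ₀) := by module
      rw [this, real_inner_smul_right]
    rw [hinner] at hsub
    simp only [smul_eq_mul] at hmid
    have hy' : g y - g ξ₀ - ⟪z, y - ξ₀⟫ = 0 := hy
    linarith
  have hDconv : ∀ (y : E2) (s : ℝ), 0 ≤ s → s ≤ 1 → D (ξ₀ + s • (y - ξ₀)) ≤ s * D y := by
    intro y s hs0 hs1
    have hcvx := hg.convexOn.2 (mem_univ ξ₀) (mem_univ y) (by linarith : (0:ℝ) ≤ 1 - s) hs0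
      (by ring)
    have heq : (1-s) • ξ₀ + s • y = ξ₀ + s • (y - ξ₀) := by module
    rw [heq] at hcvx
    have hinner : ⟪z, (ξ₀ + s • (y - ξ₀)) - ξ₀⟫ = s * ⟪z, y - ξ₀⟫ := by
      have : (ξ₀ + s • (y - ξ₀)) - ξ₀ = s • (y - ξ₀) := by module
      rw [this, real_inner_smul_right]
    simp only [hDdef]
    rw [hinner]
    simp only [smul_eq_mul] at hcvx
    nlinarith
  rw [Metric.tendsto_atTop]
  intro ε hε
  obtain ⟨η, hηmem, hηmin⟩ := (isCompact_sphere ξ₀ ε).exists_isMinOn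
    (NormedSpace.sphere_nonempty.mpr hε.le) (hDcont.continuousOn)
  have hηne : η ≠ ξ₀ := by
    intro h
    rw [mem_sphere, h] at hηmem
    simp at hηmem
    linarith
  have hδpos : 0 < D η := by
    rcases (hDnn η).lt_or_eq with h | h
    · exact h
    · exact absurd (hDzero η h.symm) hηne
  rw [Metric.tendsto_atTop] at hD
  obtain ⟨N, hN⟩ := hD (D η) hδpos
  refine ⟨N, fun n hn => ?_⟩
  by_contra hfar
  push_neg at hfar
  have hdist : ε ≤ dist (ξ n) ξ₀ := hfar
  have hdpos : 0 < dist (ξ n) ξ₀ := lt_of_lt_of_le hε hdist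
  set s : ℝ := ε / dist (ξ n) ξ₀ with hs
  have hs0 : 0 < s := div_pos hε hdpos
  have hs1 : s ≤ 1 := (div_le_one hdpos).mpr hdist
  set η' : E2 := ξ₀ + s • (ξ n - ξ₀) with hη'
  have hη'mem : η' ∈ sphere ξ₀ ε := by
    rw [mem_sphere, dist_eq_norm]
    have : η' - ξ₀ = s • (ξ n - ξ₀) := by rw [hη']; module
    rw [this, norm_smul, Real.norm_eq_abs, abs_of_pos hs0, hs]
    rw [dist_eq_norm] at hdpos ⊢
    field_simp
  have h1 : D η ≤ D η' := hηmin hη'mem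
  have h2 : D η' ≤ s * D (ξ n) := hDconv (ξ n) s hs0.le hs1
  have h3 : D (ξ n) < D η := by
    have := hN n hn
    rw [Real.dist_eq, sub_zero] at this
    calc D (ξ n) ≤ |D (ξ n)| := le_abs_self _
    _ < D η := this
  nlinarith [hDnn (ξ n)]

lemma aemeasurable_gradient_comp {μ : Measure E2} {f : E2 → E2 → ℝ}
    (hf : Measurable (Function.uncurry f)) {w : E2 → E2} (hw : AEMeasurable w μ)
    (hsm : ∀ᵐ x ∂μ, DifferentiableAt ℝ (f x) (w x)) :
    AEMeasurable (fun x => gradient (f x) (w x)) μ := by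
  set b : OrthonormalBasis (Fin 2) ℝ E2 := EuclideanSpace.basisFun (Fin 2) ℝ with hb
  set F : ℕ → E2 → E2 := fun n x =>
    ∑ i : Fin 2, (((n:ℝ)+1) * (f x (w x + ((n:ℝ)+1)⁻¹ • b i) - f x (w x))) • b i with hF
  have hFmeas : ∀ n, AEMeasurable (F n) μ := by
    intro n
    apply Finset.aemeasurable_fun_sum
    intro i _
    apply AEMeasurable.smul_const
    apply AEMeasurable.const_mul
    apply AEMeasurable.sub
    · exact hf.comp_aemeasurable (aemeasurable_id.prodMk
        (hw.add_const (((n:ℝ)+1)⁻¹ • b i)))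
    · exact hf.comp_aemeasurable (aemeasurable_id.prodMk hw)
  apply aemeasurable_of_tendsto_metrizable_ae atTop hFmeas
  filter_upwards [hsm] with x hx
  have hlim : ∀ i : Fin 2, Tendsto
      (fun n : ℕ => (((n:ℝ)+1) * (f x (w x + ((n:ℝ)+1)⁻¹ • b i) - f x (w x))))
      atTop (nhds (fderiv ℝ (f x) (w x) (b i))) := by
    intro i
    have h1 : Tendsto (fun n : ℕ => (n:ℝ)+1) atTop atTop :=
      (tendsto_natCast_atTop_atTop (R := ℝ)).atTop_add tendsto_const_nhds
    have hc : Tendsto (fun n : ℕ => ‖(n:ℝ)+1‖) atTop atTop :=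
      h1.congr (fun n => by rw [Real.norm_eq_abs, abs_of_nonneg (by positivity)])
    have := hx.hasFDerivAt.lim (b i) (c := fun n : ℕ => (n:ℝ)+1) hc
    simpa [smul_eq_mul] using this
  have hsum : Tendsto (fun n => F n x) atTop
      (nhds (∑ i : Fin 2, (fderiv ℝ (f x) (w x) (b i)) • b i)) := by
    apply tendsto_finset_sum
    intro i _
    exact (hlim i).smul_const (b i)
  convert hsum using 2
  have : ∑ i : Fin 2, (fderiv ℝ (f x) (w x) (b i)) • b i
      = ∑ i : Fin 2, ⟪b i, gradient (f x) (w x)⟫ • b i := by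
    congr 1; funext i
    rw [real_inner_comm, inner_gradient_eq]
  rw [this, b.sum_repr']

lemma rpow_sub_bound {p : ℝ} (hp : 1 ≤ p) (a b : E2) :
    ‖a - b‖ ^ p ≤ 2 ^ (p-1) * (‖a‖ ^ p + ‖b‖ ^ p) := by
  have h1 : ‖a - b‖ ^ p ≤ (‖a‖ + ‖b‖) ^ p :=
    Real.rpow_le_rpow (norm_nonneg _) (norm_sub_le a b) (by linarith)
  have h2 : ((‖a‖₊ + ‖b‖₊ : ℝ≥0)) ^ p ≤ (2:ℝ≥0) ^ (p-1) * (‖a‖₊ ^ p + ‖b‖₊ ^ p) :=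
    NNReal.rpow_add_le_mul_rpow_add_rpow _ _ hp
  have h3 := (NNReal.coe_le_coe.mpr h2)
  push_cast [NNReal.coe_rpow] at h3
  linarith

/-- weak `L^p` convergence plus convergence of the strictly convex integral
functional implies strong `L^p` convergence. -/
theorem strong_convergence_of_energy_convergence
    (Ω : Set E2) (hΩo : IsOpen Ω) (hΩb : IsBounded Ω)
    (p α β γ : ℝ) (hp : 1 < p) (hα : 0 < α) (hβ : 0 < β) (hγ : 0 < γ)
    (f : E2 → E2 → ℝ) (hf : PGrowth p α β γ Ω f)
    (w : ℕ → E2 → E2) (w₀ : E2 → E2)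
    (hw : ∀ h, MemLp (w h) (ENNReal.ofReal p) (volume.restrict Ω))
    (hw₀ : MemLp w₀ (ENNReal.ofReal p) (volume.restrict Ω))
    (hweak : WeakLpVec (p / (p - 1)) Ω w w₀)
    (henergy : Tendsto (fun h => ∫ x in Ω, f x (w h x)) atTop
      (nhds (∫ x in Ω, f x (w₀ x)))) :
    Tendsto (fun h => eLpNorm (fun x => w h x - w₀ x) (ENNReal.ofReal p)
      (volume.restrict Ω)) atTop (nhds 0) := by
  have hp0 : 0 < p := lt_trans one_pos hp
  set μ : Measure E2 := volume.restrict Ω with hμ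
  haveI : IsFiniteMeasure μ := by
    constructor
    rw [hμ, Measure.restrict_apply_univ]
    exact hΩb.measure_lt_top
  have hq : p.HolderConjugate (p/(p-1)) := Real.HolderConjugate.conjExponent hp
  set p' : ℝ≥0∞ := ENNReal.ofReal p with hp'
  have hp'0 : p' ≠ 0 := by
    simp only [hp', ne_eq, ENNReal.ofReal_eq_zero, not_le]
    exact hp0
  have hp'top : p' ≠ ∞ := ENNReal.ofReal_ne_top
  have hp'real : p'.toReal = p := ENNReal.toReal_ofReal hp0.le
  set ζ : E2 → E2 := fun x => gradient (f x) (w₀ x) with hζ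
  have hgood : ∀ᵐ x ∂μ, (∀ ξ : E2, α * ‖ξ‖ ^ p ≤ f x ξ) ∧ (∀ ξ : E2, f x ξ ≤ β * ‖ξ‖^p + γ)
      ∧ StrictConvexOn ℝ Set.univ (f x) ∧ ContDiff ℝ 1 (f x) := by
    filter_upwards [hf.lower, hf.upper, hf.strictConvex, hf.smooth] with x h1 h2 h3 h4
    exact ⟨h1, h2, h3, h4⟩
  -- basic measurability / integrability
  have hwaem : ∀ u : E2 → E2, MemLp u p' μ → AEMeasurable (fun x => f x (u x)) μ := fun u hu =>
    hf.measurable.comp_aemeasurable (aemeasurable_id.prodMk hu.1.aemeasurable)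
  have hfint : ∀ u : E2 → E2, MemLp u p' μ → Integrable (fun x => f x (u x)) μ := by
    intro u hu
    have hd : Integrable (fun x => β * ‖u x‖ ^ p + γ) μ := by
      have := (hu.integrable_norm_rpow hp'0 hp'top).const_mul β
      rw [hp'real] at this
      exact this.add (integrable_const γ)
    refine Integrable.mono' hd ((hwaem u hu).aestronglyMeasurable) ?_
    filter_upwards [hgood] with x hx
    obtain ⟨h1, h2, -, -⟩ := hx
    rw [Real.norm_eq_abs, abs_of_nonneg (le_trans (by positivity) (h1 (u x)))]
    exact h2 (u x)
  have hζae : AEMeasurable ζ μ := by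
    apply aemeasurable_gradient_comp hf.measurable hw₀.1.aemeasurable
    filter_upwards [hf.smooth] with x h
    exact (h.differentiable one_ne_zero).differentiableAt
  set C : ℝ := β * 3 ^ p * 2 ^ (p-1) + γ with hC
  have hCpos : 0 < C := by positivity
  have hζbd : ∀ᵐ x ∂μ, ‖ζ x‖ ≤ C * (1 + ‖w₀ x‖ ^ (p-1)) := by
    filter_upwards [hgood] with x hx
    obtain ⟨h1, h2, h3, h4⟩ := hx
    exact gradient_bound hp hβ hγ h3.convexOn (h4.differentiable one_ne_zero)
      (fun ξ => le_trans (by positivity) (h1 ξ)) h2 (w₀ x)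
  have hζLq : MemLp ζ (ENNReal.ofReal (p/(p-1))) μ := by
    have h1 : MemLp (fun x => ‖w₀ x‖ ^ (p-1)) (ENNReal.ofReal (p/(p-1))) μ := by
      have h := hw₀.norm_rpow_div (ENNReal.ofReal (p-1))
      rw [ENNReal.toReal_ofReal (by linarith)] at h
      have hdiv : p' / ENNReal.ofReal (p-1) = ENNReal.ofReal (p/(p-1)) := by
        rw [hp', ← ENNReal.ofReal_div_of_pos (by linarith)]
      rwa [hdiv] at h
    have h2 : MemLp (fun _ : E2 => (1:ℝ)) (ENNReal.ofReal (p/(p-1))) μ := memLp_const 1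
    have h3 := (h2.add h1).const_mul C
    refine MemLp.of_le h3 hζae.aestronglyMeasurable ?_
    filter_upwards [hζbd] with x hx
    simp only [Pi.add_apply]
    rw [Real.norm_eq_abs, abs_of_nonneg (mul_nonneg hCpos.le (by positivity))]
    exact hx
  have hinner_int : ∀ u : E2 → E2, MemLp u p' μ → Integrable (fun x => ⟪u x, ζ x⟫) μ := by
    intro u hu
    have hconj : (1 : ℝ≥0∞) / 1 = 1 / p' + 1 / (ENNReal.ofReal (p/(p-1))) := by
      rw [one_div, one_div, one_div, inv_one, hp',
        ← ENNReal.ofReal_inv_of_pos hp0, ← ENNReal.ofReal_inv_of_pos hq.symm.pos,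
        ← ENNReal.ofReal_add (inv_nonneg.mpr hp0.le) (inv_nonneg.mpr hq.symm.pos.le), hq.inv_add_inv_eq_one,
        ENNReal.ofReal_one]
    haveI : ENNReal.HolderTriple p' (ENNReal.ofReal (p/(p-1))) 1 :=
      ⟨by simpa [one_div] using hconj.symm⟩
    have hmul : MemLp ((fun x => ‖u x‖) • (fun x => ‖ζ x‖)) 1 μ :=
      MemLp.smul hζLq.norm hu.norm
    refine Integrable.mono' (memLp_one_iff_integrable.mp hmul)
      (AEStronglyMeasurable.inner hu.1 hζLq.1) ?_
    filter_upwards with x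
    simpa [Pi.smul_apply, smul_eq_mul] using abs_real_inner_le_norm (u x) (ζ x)
  set D : ℕ → E2 → ℝ :=
    fun h x => f x (w h x) - f x (w₀ x) - (⟪w h x, ζ x⟫ - ⟪w₀ x, ζ x⟫) with hD
  have hDint : ∀ h, Integrable (D h) μ := fun h =>
    ((hfint _ (hw h)).sub (hfint _ hw₀)).sub ((hinner_int _ (hw h)).sub (hinner_int _ hw₀))
  have hDrw : ∀ h x, D h x = f x (w h x) - f x (w₀ x) - ⟪ζ x, w h x - w₀ x⟫ := by
    intro h x
    simp only [hD]
    rw [inner_sub_right, real_inner_comm (w h x) (ζ x), real_inner_comm (w₀ x) (ζ x)]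
  have hDnn : ∀ h, 0 ≤ᵐ[μ] D h := by
    intro h
    filter_upwards [hgood] with x hx
    obtain ⟨h1, h2, h3, h4⟩ := hx
    have hsub := convex_subgrad (x := w₀ x) h3.convexOn ((h4.differentiable one_ne_zero) (w₀ x)) (w h x)
    simp only [Pi.zero_apply, hDrw h x]
    linarith
  have hDtendsto : Tendsto (fun h => ∫ x, D h x ∂μ) atTop (nhds 0) := by
    have heq : ∀ h, ∫ x, D h x ∂μ = ((∫ x, f x (w h x) ∂μ) - (∫ x, f x (w₀ x) ∂μ))
        - ((∫ x, ⟪w h x, ζ x⟫ ∂μ) - (∫ x, ⟪w₀ x, ζ x⟫ ∂μ)) := by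
      intro h
      have e1 : ∫ x, D h x ∂μ = (∫ x, (f x (w h x) - f x (w₀ x)) ∂μ)
          - ∫ x, (⟪w h x, ζ x⟫ - ⟪w₀ x, ζ x⟫) ∂μ :=
        integral_sub (f := fun x => f x (w h x) - f x (w₀ x))
          (g := fun x => ⟪w h x, ζ x⟫ - ⟪w₀ x, ζ x⟫)
          ((hfint _ (hw h)).sub (hfint _ hw₀))
          ((hinner_int _ (hw h)).sub (hinner_int _ hw₀))
      rw [e1, integral_sub (hfint _ (hw h)) (hfint _ hw₀),
        integral_sub (hinner_int _ (hw h)) (hinner_int _ hw₀)]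
    simp_rw [heq]
    have h2 : Tendsto (fun h => ∫ x, ⟪w h x, ζ x⟫ ∂μ) atTop
        (nhds (∫ x, ⟪w₀ x, ζ x⟫ ∂μ)) := hweak ζ hζLq
    have h3 := (henergy.sub (tendsto_const_nhds (x := ∫ x, f x (w₀ x) ∂μ))).sub
      (h2.sub (tendsto_const_nhds (x := ∫ x, ⟪w₀ x, ζ x⟫ ∂μ)))
    simpa using h3
  -- subsequence principle
  apply tendsto_of_subseq_tendsto
  intro ns hns
  have hL1 : Tendsto (fun n => eLpNorm (D (ns n)) 1 μ) atTop (nhds 0) := by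
    have heq : ∀ n, eLpNorm (D (ns n)) 1 μ = ENNReal.ofReal (∫ x, D (ns n) x ∂μ) := by
      intro n
      rw [eLpNorm_one_eq_lintegral_enorm,
        ofReal_integral_eq_lintegral_ofReal (hDint _) (hDnn _)]
      apply lintegral_congr_ae
      filter_upwards [hDnn (ns n)] with x hx
      rw [← ofReal_norm, Real.norm_eq_abs, abs_of_nonneg hx]
    simp_rw [heq]
    have := ENNReal.tendsto_ofReal (hDtendsto.comp hns)
    simpa using this
  have htim : TendstoInMeasure μ (fun n => D (ns n)) atTop 0 := by
    apply tendstoInMeasure_of_tendsto_eLpNorm (p := 1) one_ne_zero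
      (fun n => (hDint (ns n)).1) aestronglyMeasurable_const
    refine Tendsto.congr (fun n => ?_) hL1
    congr 1
    funext x
    show D (ns n) x = D (ns n) x - (0:ℝ)
    rw [sub_zero]
  obtain ⟨ms, hms, hae⟩ := htim.exists_seq_tendsto_ae
  refine ⟨ms, ?_⟩
  set σ : ℕ → ℕ := fun n => ns (ms n) with hσ
  have hσtend : Tendsto σ atTop atTop := hns.comp hms.tendsto_atTop
  have hwpt : ∀ᵐ x ∂μ, Tendsto (fun n => w (σ n) x) atTop (nhds (w₀ x)) := by
    filter_upwards [hgood, hae] with x hx hx2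
    obtain ⟨h1, h2, h3, h4⟩ := hx
    apply bregman_tendsto h3 h4
    have heq : ∀ n, D (σ n) x
        = f x (w (σ n) x) - f x (w₀ x) - ⟪gradient (f x) (w₀ x), w (σ n) x - w₀ x⟫ :=
      fun n => hDrw (σ n) x
    simp only [Pi.zero_apply] at hx2
    exact hx2.congr heq
  -- Fatou argument
  have hfinal : Tendsto (fun n => ∫⁻ x, (‖w (σ n) x - w₀ x‖₊ : ℝ≥0∞) ^ p ∂μ)
      atTop (nhds 0) := by
    set c : ℝ := 2 ^ (p-1) / α with hc
    have hcpos : 0 < c := by positivity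
    set Gk : ℕ → E2 → ℝ≥0∞ :=
      fun n x => ENNReal.ofReal (c * (f x (w (σ n) x) + f x (w₀ x))) with hGk
    set G : E2 → ℝ≥0∞ := fun x => ENNReal.ofReal (2 * c * f x (w₀ x)) with hG
    set Ek : ℕ → E2 → ℝ≥0∞ := fun n x => (‖w (σ n) x - w₀ x‖₊ : ℝ≥0∞) ^ p with hEk
    have hEmeas : ∀ n, AEMeasurable (Ek n) μ := fun n =>
      ENNReal.continuous_rpow_const.measurable.comp_aemeasurable (((hw (σ n)).1.sub hw₀.1).enorm)
    have hGmeas : ∀ n, AEMeasurable (Gk n) μ := fun n =>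
      ENNReal.measurable_ofReal.comp_aemeasurable
        (((hwaem _ (hw (σ n))).add (hwaem _ hw₀)).const_mul c)
    have hEG : ∀ n, Ek n ≤ᵐ[μ] Gk n := by
      intro n
      filter_upwards [hgood] with x hx
      obtain ⟨h1, h2, -, -⟩ := hx
      have key : ‖w (σ n) x - w₀ x‖ ^ p ≤ c * (f x (w (σ n) x) + f x (w₀ x)) := by
        have hb := rpow_sub_bound hp.le (w (σ n) x) (w₀ x)
        have l1 := h1 (w (σ n) x)
        have l2 := h1 (w₀ x)
        rw [hc, div_mul_eq_mul_div, le_div_iff₀ hα]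
        nlinarith [Real.rpow_nonneg (norm_nonneg (w (σ n) x - w₀ x)) p,
          Real.rpow_nonneg (show (0:ℝ) ≤ 2 by norm_num) (p-1)]
      calc Ek n x = ENNReal.ofReal (‖w (σ n) x - w₀ x‖ ^ p) := by
            simp only [hEk]
            rw [← enorm_eq_nnnorm, ← ofReal_norm,
              ENNReal.ofReal_rpow_of_nonneg (norm_nonneg _) hp0.le]
      _ ≤ Gk n x := ENNReal.ofReal_le_ofReal key
    have hptwise : ∀ᵐ x ∂μ, Tendsto (fun n => Gk n x) atTop (nhds (G x)) ∧
        Tendsto (fun n => Ek n x) atTop (nhds 0) := by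
      filter_upwards [hgood, hwpt] with x hx hxw
      obtain ⟨h1, h2, h3, h4⟩ := hx
      constructor
      · apply ENNReal.tendsto_ofReal
        have hcont : ContinuousAt (f x) (w₀ x) := h4.continuous.continuousAt
        have ht := ((hcont.tendsto.comp hxw).add (tendsto_const_nhds (x := f x (w₀ x)))).const_mul c
        convert ht using 2
        · simp only [Function.comp_apply]
        · ring
      · have hxd : Tendsto (fun n => ‖w (σ n) x - w₀ x‖) atTop (nhds 0) := by
          have h5 : Tendsto (fun n => w (σ n) x - w₀ x) atTop (nhds 0) := by
            simpa using hxw.sub (tendsto_const_nhds (x := w₀ x))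
          simpa [Function.comp_def] using (continuous_norm.tendsto (0 : E2)).comp h5
        have hr : Tendsto (fun n => ‖w (σ n) x - w₀ x‖ ^ p) atTop (nhds 0) := by
          have := hxd.rpow_const (p := p) (Or.inr hp0.le)
          rwa [Real.zero_rpow hp0.ne'] at this
        have := ENNReal.tendsto_ofReal hr
        simp only [ENNReal.ofReal_zero] at this
        refine Tendsto.congr (fun n => ?_) this
        simp only [hEk]
        rw [← enorm_eq_nnnorm, ← ofReal_norm,
          ENNReal.ofReal_rpow_of_nonneg (norm_nonneg _) hp0.le]
    have hGint : ∀ n, Integrable (fun x => c * (f x (w (σ n) x) + f x (w₀ x))) μ :=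
      fun n => (((hfint _ (hw (σ n))).add (hfint _ hw₀)).const_mul c)
    have hGnn : ∀ n, 0 ≤ᵐ[μ] fun x => c * (f x (w (σ n) x) + f x (w₀ x)) := by
      intro n
      filter_upwards [hgood] with x hx
      obtain ⟨h1, -, -, -⟩ := hx
      have l1 := le_trans (by positivity : (0:ℝ) ≤ α * ‖w (σ n) x‖ ^ p) (h1 (w (σ n) x))
      have l2 := le_trans (by positivity : (0:ℝ) ≤ α * ‖w₀ x‖ ^ p) (h1 (w₀ x))
      positivity
    have hBk : ∀ n, ∫⁻ x, Gk n x ∂μ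
        = ENNReal.ofReal (∫ x, c * (f x (w (σ n) x) + f x (w₀ x)) ∂μ) :=
      fun n => (ofReal_integral_eq_lintegral_ofReal (hGint n) (hGnn n)).symm
    have hG0int : Integrable (fun x => 2 * c * f x (w₀ x)) μ :=
      (hfint _ hw₀).const_mul (2*c)
    have hG0nn : 0 ≤ᵐ[μ] fun x => 2 * c * f x (w₀ x) := by
      filter_upwards [hgood] with x hx
      obtain ⟨h1, -, -, -⟩ := hx
      have l2 := le_trans (by positivity : (0:ℝ) ≤ α * ‖w₀ x‖ ^ p) (h1 (w₀ x))
      positivity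
    have hB : ∫⁻ x, G x ∂μ = ENNReal.ofReal (∫ x, 2 * c * f x (w₀ x) ∂μ) :=
      (ofReal_integral_eq_lintegral_ofReal hG0int hG0nn).symm
    have hBne : ∫⁻ x, G x ∂μ ≠ ∞ := by rw [hB]; exact ENNReal.ofReal_ne_top
    have hBkne : ∀ n, ∫⁻ x, Gk n x ∂μ ≠ ∞ := fun n => by
      rw [hBk]; exact ENNReal.ofReal_ne_top
    have hBtend : Tendsto (fun n => ∫⁻ x, Gk n x ∂μ) atTop (nhds (∫⁻ x, G x ∂μ)) := by
      simp_rw [hBk, hB]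
      apply ENNReal.tendsto_ofReal
      have heq1 : ∀ n, ∫ x, c * (f x (w (σ n) x) + f x (w₀ x)) ∂μ
          = c * ((∫ x, f x (w (σ n) x) ∂μ) + ∫ x, f x (w₀ x) ∂μ) := by
        intro n
        rw [integral_const_mul, integral_add (hfint _ (hw (σ n))) (hfint _ hw₀)]
      have heq2 : ∫ x, 2 * c * f x (w₀ x) ∂μ = 2 * c * ∫ x, f x (w₀ x) ∂μ :=
        integral_const_mul _ _
      simp_rw [heq1, heq2]
      have := ((henergy.comp hσtend).add (tendsto_const_nhds
        (x := ∫ x, f x (w₀ x) ∂μ))).const_mul c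
      convert this using 2
      · simp only [Function.comp_apply]
      · ring
    have hAle : ∀ n, ∫⁻ x, Ek n x ∂μ ≤ ∫⁻ x, Gk n x ∂μ :=
      fun n => lintegral_mono_ae (hEG n)
    have hAne : ∀ n, ∫⁻ x, Ek n x ∂μ ≠ ∞ :=
      fun n => ne_top_of_le_ne_top (hBkne n) (hAle n)
    have hsubeq : ∀ n, ∫⁻ x, (Gk n x - Ek n x) ∂μ
        = (∫⁻ x, Gk n x ∂μ) - (∫⁻ x, Ek n x ∂μ) :=
      fun n => lintegral_sub' (hEmeas n) (hAne n) (hEG n)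
    have hfatou : ∫⁻ x, G x ∂μ
        ≤ liminf (fun n => (∫⁻ x, Gk n x ∂μ) - (∫⁻ x, Ek n x ∂μ)) atTop := by
      have h1 : ∫⁻ x, G x ∂μ = ∫⁻ x, liminf (fun n => Gk n x - Ek n x) atTop ∂μ := by
        apply lintegral_congr_ae
        filter_upwards [hptwise] with x hx
        obtain ⟨hg, he⟩ := hx
        have : Tendsto (fun n => Gk n x - Ek n x) atTop (nhds (G x - 0)) := by
          apply ENNReal.Tendsto.sub hg he
          left
          simp only [hG]
          exact ENNReal.ofReal_ne_top
        rw [tsub_zero] at this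
        exact this.liminf_eq.symm
      rw [h1]
      refine le_trans (lintegral_liminf_le' (fun n => (hGmeas n).sub (hEmeas n))) ?_
      apply le_of_eq
      congr 1
      funext n
      exact hsubeq n
    rw [ENNReal.tendsto_atTop_zero]
    intro ε hε
    rcases eq_or_ne ε ∞ with rfl | hεtop
    · exact ⟨0, fun n _ => le_top⟩
    have hδ0 : ε / 2 ≠ 0 := by
      simp only [ne_eq, ENNReal.div_eq_zero_iff]
      push_neg
      exact ⟨hε.ne', by norm_num⟩
    have hδtop : ε / 2 ≠ ∞ := by
      simp [ENNReal.div_eq_top, hεtop]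
    have hBlt : ∀ᶠ n in atTop, ∫⁻ x, Gk n x ∂μ < ∫⁻ x, G x ∂μ + ε / 2 :=
      hBtend.eventually_lt_const (ENNReal.lt_add_right hBne hδ0)
    rcases le_or_gt (∫⁻ x, G x ∂μ) (ε/2) with hcase | hcase
    · -- small B
      obtain ⟨N, hN⟩ := hBlt.exists_forall_of_atTop
      refine ⟨N, fun n hn => ?_⟩
      calc ∫⁻ x, Ek n x ∂μ ≤ ∫⁻ x, Gk n x ∂μ := hAle n
      _ ≤ ∫⁻ x, G x ∂μ + ε/2 := (hN n hn).le
      _ ≤ ε/2 + ε/2 := by exact add_le_add_left hcase _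
      _ = ε := ENNReal.add_halves ε
    · -- main case
      have hc0 : (∫⁻ x, G x ∂μ) - ε/2 < ∫⁻ x, G x ∂μ :=
        ENNReal.sub_lt_self hBne (lt_of_le_of_lt zero_le hcase).ne' hδ0
      have hev : ∀ᶠ n in atTop,
          (∫⁻ x, G x ∂μ) - ε/2 < (∫⁻ x, Gk n x ∂μ) - (∫⁻ x, Ek n x ∂μ) :=
        eventually_lt_of_lt_liminf (lt_of_lt_of_le hc0 hfatou)
      obtain ⟨N, hN⟩ := (hev.and hBlt).exists_forall_of_atTop
      refine ⟨N, fun n hn => ?_⟩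
      obtain ⟨h5, h6⟩ := hN n hn
      have hle2 : ε/2 ≤ ∫⁻ x, G x ∂μ := hcase.le
      have h2ε : ε/2 + ε/2 = ε := ENNReal.add_halves ε
      have hsum : ((∫⁻ x, G x ∂μ) - ε/2) + ε = (∫⁻ x, G x ∂μ) + ε/2 := by
        calc ((∫⁻ x, G x ∂μ) - ε/2) + ε
            = ((∫⁻ x, G x ∂μ) - ε/2) + (ε/2 + ε/2) := by rw [h2ε]
        _ = (((∫⁻ x, G x ∂μ) - ε/2) + ε/2) + ε/2 := by rw [add_assoc]
        _ = (∫⁻ x, G x ∂μ) + ε/2 := by rw [tsub_add_cancel_of_le hle2]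
      have key : (∫⁻ x, Ek n x ∂μ) + ((∫⁻ x, G x ∂μ) - ε/2)
          ≤ ε + ((∫⁻ x, G x ∂μ) - ε/2) := by
        calc (∫⁻ x, Ek n x ∂μ) + ((∫⁻ x, G x ∂μ) - ε/2)
            ≤ (∫⁻ x, Ek n x ∂μ) + ((∫⁻ x, Gk n x ∂μ) - (∫⁻ x, Ek n x ∂μ)) :=
              add_le_add_right h5.le _
        _ = ∫⁻ x, Gk n x ∂μ := add_tsub_cancel_of_le (hAle n)
        _ ≤ (∫⁻ x, G x ∂μ) + ε/2 := h6.le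
        _ = ε + ((∫⁻ x, G x ∂μ) - ε/2) := by
            rw [add_comm ε ((∫⁻ x, G x ∂μ) - ε/2), hsum]
      have hc0top : (∫⁻ x, G x ∂μ) - ε/2 ≠ ∞ := ne_top_of_le_ne_top hBne tsub_le_self
      exact (ENNReal.add_le_add_iff_right hc0top).mp key
  -- convert lintegral convergence to eLpNorm convergence
  have heq : ∀ n, eLpNorm (fun x => w (σ n) x - w₀ x) p' μ
      = (∫⁻ x, (‖w (σ n) x - w₀ x‖₊ : ℝ≥0∞) ^ p ∂μ) ^ (1/p) := by
    intro n
    rw [eLpNorm_eq_lintegral_rpow_enorm_toReal hp'0 hp'top, hp'real]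
    rfl
  have hcomp := (ENNReal.continuous_rpow_const (y := 1/p)).tendsto 0 |>.comp hfinal
  rw [← ENNReal.zero_rpow_of_pos (by positivity : (0:ℝ) < 1/p)]
  exact Tendsto.congr (fun n => (heq n).symm) hcomp

end
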